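/- arXiv:1902.00627 — 3 statements merged into one kernel-verified Lean document; each statement's English description precedes it below -/
import Mathlib

section
/- Let p ≥ 0 and 0 ≤ i_0 < … < i_p ≤ n. Then ∫_{[i_0,…,i_p]} ω_{i_0,…,i_p} = 1/p!, i.e. ∫_{[0,1]^p} ω_{i_0,…,i_p}(G(s))(∂G/∂s_0,…,∂G/∂s_{p−1}) ds = 1/p! where G = G_{i_0,…,i_p}. Consequently the integration map is a left inverse of the Whitney map: R(W(\widehat{[i_0,…,i_p]})) = \widehat{[i_0,…,i_p]}. -/
open MeasureTheory
open scoped BigOperators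

noncomputable section

/-- ℝ^{n+1} -/
abbrev Vec (n : ℕ) := Fin (n + 1) → ℝ

/-- standard basis vector e_i -/
def eVec (n : ℕ) (i : Fin (n + 1)) : Vec n := Pi.single i 1

/-- Raw (not necessarily alternating) inhomogeneous forms: a family of
degree-`p` "forms" given as functions of a point and a `p`-tuple of vectors. -/
def MForm (n : ℕ) := (p : ℕ) → Vec n → (Fin p → Vec n) → ℝ

/-- Embed a raw `p`-form as an inhomogeneous form concentrated in degree `p`. -/
def ofDeg (n p : ℕ) (ω : Vec n → (Fin p → Vec n) → ℝ) : MForm n :=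
  fun q t v => if h : q = p then ω t (fun i => v (Fin.cast h.symm i)) else 0

/-- Exterior derivative. -/
def exd (n : ℕ) (F : MForm n) : MForm n :=
  fun q => match q with
  | 0 => fun _ _ => 0
  | (p + 1) => fun t v =>
      ∑ j : Fin (p + 1), (-1 : ℝ) ^ (j : ℕ) *
        fderiv ℝ (fun x => F p x (fun i => v (Fin.succAbove j i))) t (v j)

/-- The Dupont operator `h^i`. -/
def hOp (n : ℕ) (i : Fin (n + 1)) (F : MForm n) : MForm n :=
  fun p t v =>
    ∫ s in (0:ℝ)..1, (1 - s) ^ p *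
      F (p + 1) ((1 - s) • t + s • eVec n i) (Fin.cons (eVec n i - t) v)

/-- Iterated Dupont operators `h^{i_k} ∘ ⋯ ∘ h^{i_0}`. -/
def hTuple (n : ℕ) {m : ℕ} (c : Fin m → Fin (n + 1)) (F : MForm n) : MForm n :=
  (List.ofFn c).foldl (fun G i => hOp n i G) F

/-- The Whitney form ω_{c 0, …, c p}. -/
def whitney (n p : ℕ) (c : Fin (p + 1) → Fin (n + 1)) :
    Vec n → (Fin p → Vec n) → ℝ :=
  fun t v => ∑ l : Fin (p + 1), (-1 : ℝ) ^ (l : ℕ) * t (c l) *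
    Matrix.det (Matrix.of fun a b : Fin p => v a (c (Fin.succAbove l b)))

/-- ω̄ = p! ω. -/
def whitneyBar (n p : ℕ) (c : Fin (p + 1) → Fin (n + 1)) :
    Vec n → (Fin p → Vec n) → ℝ :=
  fun t v => (Nat.factorial p : ℝ) * whitney n p c t v

/-- Wedge of a homogeneous `k`-form with an inhomogeneous form. -/
def wedgeHom (n k : ℕ) (α : Vec n → (Fin k → Vec n) → ℝ) (G : MForm n) : MForm n :=
  fun q t v =>
    if h : k ≤ q then
      ((Nat.factorial k : ℝ) * (Nat.factorial (q - k) : ℝ))⁻¹ *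
        ∑ σ : Equiv.Perm (Fin q), ((Equiv.Perm.sign σ : ℤ) : ℝ) *
          α t (fun i => v (σ (Fin.castLE h i))) *
          G (q - k) t (fun j => v (σ (Fin.cast (Nat.add_sub_cancel' h) (Fin.natAdd k j))))
    else 0

open scoped Classical in
/-- The Dupont homotopy. -/
def sDup (n : ℕ) (F : MForm n) : MForm n :=
  fun q t v => - ∑ k ∈ Finset.range n,
    ∑ c ∈ Finset.univ.filter (fun c : Fin (k + 1) → Fin (n + 1) => StrictMono c),
      wedgeHom n k (whitneyBar n k c) (hTuple n c F) q t v

/-- The unit cube [0,1]^p. -/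
def cubeSet (p : ℕ) : Set (Fin p → ℝ) := Set.univ.pi fun _ => Set.Icc (0:ℝ) 1

/-- Canonical parametrization of the simplex with vertices `verts`. -/
def GmapV (n p : ℕ) (verts : Fin (p + 1) → Vec n) : (Fin p → ℝ) → Vec n :=
  fun s => ∑ l : Fin (p + 1),
    ((∏ b ∈ Finset.univ.filter (fun b : Fin p => (b : ℕ) < (l : ℕ)), s b) *
      (if h : (l : ℕ) < p then 1 - s ⟨l, h⟩ else 1)) • verts l

/-- Integral of a raw `p`-form over the simplex with vertices `verts`. -/
def simplexIntV (n p : ℕ) (verts : Fin (p + 1) → Vec n)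
    (ω : Vec n → (Fin p → Vec n) → ℝ) : ℝ :=
  ∫ s in cubeSet p, ω (GmapV n p verts s)
      (fun a => fderiv ℝ (GmapV n p verts) s (Pi.single a 1))

/-- ∫_{[c 0, …, c p]} ω. -/
def simplexInt (n p : ℕ) (c : Fin (p + 1) → Fin (n + 1))
    (ω : Vec n → (Fin p → Vec n) → ℝ) : ℝ :=
  simplexIntV n p (fun l => eVec n (c l)) ω

open scoped Classical in
/-- (WR)(ω) for a homogeneous raw p-form ω. -/
def WRhom (n p : ℕ) (ω : Vec n → (Fin p → Vec n) → ℝ) :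
    Vec n → (Fin p → Vec n) → ℝ :=
  fun t v =>
    ∑ c ∈ Finset.univ.filter (fun c : Fin (p + 1) → Fin (n + 1) => StrictMono c),
      simplexInt n p c ω * whitneyBar n p c t v

open scoped Classical in
/-- The integration map `R`, sending an (inhomogeneous) form to the simplicial
cochain (a function on the nonempty subsets of `{0,…,n}`) of its integrals. -/
def Rmap (n : ℕ) (F : MForm n) : Finset (Fin (n + 1)) → ℝ :=
  fun σ =>
    if h : σ.Nonempty then
      simplexInt n (σ.card - 1)
        (fun a => (σ.orderIsoOfFin
            ((Nat.succ_pred_eq_of_pos (Finset.card_pos.mpr h)).symm) a : Fin (n + 1)))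
        (F (σ.card - 1))
    else 0

/-!
Along the simplex `[c 0, …, c p]` the parametrisation is `G(s) = ∑ λ_l(s) e_{c l}` with
`λ_l(s) = s_0 ⋯ s_{l-1} (1 - s_l)`, so `ω_c(G(s))(∂G/∂s_0, …, ∂G/∂s_{p-1})` is the Laplace
expansion along the first row of the matrix with rows `λ, ∂_0 λ, …, ∂_{p-1} λ`. Subtracting `s_0`
times its second row from its first leaves `e_0`, and the remaining minor is `diag(1, s_0, …, s_0)`
times the same matrix for `p - 1` in the variables `s_1, …, s_{p-1}`; hence the determinant is
`∏ s_a ^ (p - 1 - a)`, whose integral over the cube is `∏ 1 / (p - a) = 1 / p!`.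

On a `p`-simplex missing a vertex `c j` of `c`, both `t_{c j}` and `dt_{c j}` vanish, so the
corresponding column of that matrix is zero and `ω_c` integrates to `0`; simplices of other
dimensions only see the zero components of the degree-`p` form `ω̄_c`.
-/

namespace Whitney

open Finset
open scoped Nat

def baryFactor (p : ℕ) (s : Fin p → ℝ) (l : Fin (p + 1)) (b : Fin p) : ℝ :=
  if (b : ℕ) < l then s b else if (b : ℕ) = l then 1 - s b else 1

def bary (p : ℕ) (s : Fin p → ℝ) (l : Fin (p + 1)) : ℝ := ∏ b, baryFactor p s l b

def baryFactorSlope (p : ℕ) (b : Fin p) (l : Fin (p + 1)) : ℝ :=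
  if (b : ℕ) < l then 1 else if (b : ℕ) = l then -1 else 0

def baryPartial (p : ℕ) (s : Fin p → ℝ) (a : Fin p) (l : Fin (p + 1)) : ℝ :=
  ∏ b, Function.update (baryFactor p s l) a (baryFactorSlope p a l) b

theorem bary_eq_prod_filter_mul (p : ℕ) (s : Fin p → ℝ) (l : Fin (p + 1)) :
    bary p s l = (∏ b ∈ univ.filter (fun b : Fin p => (b : ℕ) < l), s b) *
      (if h : (l : ℕ) < p then 1 - s ⟨l, h⟩ else 1) := by
  rw [bary, ← prod_filter_mul_prod_filter_not univ (fun b : Fin p => (b : ℕ) < l)]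
  congr 1
  · exact prod_congr rfl fun b hb => by simp [baryFactor, (mem_filter.1 hb).2]
  · split_ifs with h
    · rw [prod_eq_single_of_mem (⟨l, h⟩ : Fin p) (by simp)]
      · simp [baryFactor]
      · intro b hb hne
        have : (b : ℕ) ≠ l := fun hbl => hne (Fin.ext hbl)
        simp_all [baryFactor]
    · refine prod_eq_one fun b hb => ?_
      have : (b : ℕ) ≠ l := by omega
      simp_all [baryFactor]

theorem GmapV_eq_sum_bary (n p : ℕ) (verts : Fin (p + 1) → Vec n) :
    GmapV n p verts = fun s => ∑ l, bary p s l • verts l := by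
  funext s
  simp only [GmapV, bary_eq_prod_filter_mul]

theorem hasFDerivAt_baryFactor (p : ℕ) (s : Fin p → ℝ) (l : Fin (p + 1)) (b : Fin p) :
    HasFDerivAt (fun s => baryFactor p s l b)
      (baryFactorSlope p b l • (ContinuousLinearMap.proj b : (Fin p → ℝ) →L[ℝ] ℝ)) s := by
  have hproj : HasFDerivAt (fun s : Fin p → ℝ => s b) _ s := hasFDerivAt_apply (𝕜 := ℝ) b s
  unfold baryFactor baryFactorSlope
  split_ifs
  · simpa using hproj
  · exact ((hasFDerivAt_const 1 s).fun_sub hproj).congr_fderiv (by ext; simp)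
  · simpa using hasFDerivAt_const (1 : ℝ) s

theorem hasFDerivAt_bary (p : ℕ) (s : Fin p → ℝ) (l : Fin (p + 1)) :
    HasFDerivAt (fun s => bary p s l)
      (∑ a, baryPartial p s a l • (ContinuousLinearMap.proj a : (Fin p → ℝ) →L[ℝ] ℝ)) s := by
  refine (HasFDerivAt.finsetProd (u := univ) fun b _ =>
    hasFDerivAt_baryFactor p s l b).congr_fderiv (sum_congr rfl fun a _ => ?_)
  rw [baryPartial, prod_update_of_mem (mem_univ a), smul_smul, mul_comm, sdiff_singleton_eq_erase]

theorem fderiv_GmapV_apply_single (n p : ℕ) (verts : Fin (p + 1) → Vec n) (s : Fin p → ℝ)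
    (a : Fin p) :
    fderiv ℝ (GmapV n p verts) s (Pi.single a 1) = ∑ l, baryPartial p s a l • verts l := by
  rw [GmapV_eq_sum_bary,
    (HasFDerivAt.fun_sum fun l _ => (hasFDerivAt_bary p s l).smul_const (verts l)).fderiv]
  simp [Pi.single_apply]

theorem sum_smul_eVec_apply_self (n p : ℕ) {d : Fin (p + 1) → Fin (n + 1)}
    (hd : Function.Injective d) (f : Fin (p + 1) → ℝ) (j : Fin (p + 1)) :
    (∑ l, f l • eVec n (d l)) (d j) = f j := by
  simp [eVec, Pi.single_apply, hd.eq_iff]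

theorem sum_smul_eVec_apply_of_notMem_range (n p : ℕ) {d : Fin (p + 1) → Fin (n + 1)}
    {i : Fin (n + 1)} (hi : i ∉ Set.range d) (f : Fin (p + 1) → ℝ) :
    (∑ l, f l • eVec n (d l)) i = 0 := by
  simp only [Set.mem_range, not_exists] at hi
  simp [eVec, fun l => Ne.symm (hi l)]

theorem whitney_eq_det (n p : ℕ) (c : Fin (p + 1) → Fin (n + 1)) (t : Vec n)
    (v : Fin p → Vec n) :
    whitney n p c t v = (Matrix.of (Fin.cons (fun l => t (c l)) fun a l => v a (c l))).det := by
  rw [Matrix.det_succ_row_zero]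
  rfl

theorem whitney_eq_zero_of_apply_eq_zero (n p : ℕ) (c : Fin (p + 1) → Fin (n + 1))
    {t : Vec n} {v : Fin p → Vec n} (j : Fin (p + 1)) (ht : t (c j) = 0)
    (hv : ∀ a, v a (c j) = 0) :
    whitney n p c t v = 0 := by
  rw [whitney_eq_det]
  refine Matrix.det_eq_zero_of_column_eq_zero j fun a => ?_
  cases a using Fin.cases <;> simp [ht, hv]

def baryMatrix (p : ℕ) (s : Fin p → ℝ) : Matrix (Fin (p + 1)) (Fin (p + 1)) ℝ :=
  Matrix.of (Fin.cons (bary p s) (baryPartial p s))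

theorem whitney_GmapV_eVec_eq_det_baryMatrix (n p : ℕ) {c : Fin (p + 1) → Fin (n + 1)}
    (hc : Function.Injective c) (s : Fin p → ℝ) :
    whitney n p c (GmapV n p (fun l => eVec n (c l)) s)
        (fun a => fderiv ℝ (GmapV n p (fun l => eVec n (c l))) s (Pi.single a 1)) =
      (baryMatrix p s).det := by
  simp only [whitney_eq_det, fderiv_GmapV_apply_single]
  simp only [GmapV_eq_sum_bary, sum_smul_eVec_apply_self n p hc]
  rfl

section Recursion

variable {p : ℕ} (s : Fin (p + 1) → ℝ)

theorem baryFactor_succ_succ (l : Fin (p + 1)) (b : Fin p) :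
    baryFactor (p + 1) s l.succ b.succ = baryFactor p (Fin.tail s) l b := by
  simp [baryFactor, Fin.tail]

theorem bary_succ_zero : bary (p + 1) s 0 = 1 - s 0 := by
  simp [bary, baryFactor]

theorem bary_succ_succ (l : Fin (p + 1)) :
    bary (p + 1) s l.succ = s 0 * bary p (Fin.tail s) l := by
  rw [bary, bary, Fin.prod_univ_succ]
  congr 1
  exact prod_congr rfl fun b _ => baryFactor_succ_succ s l b

theorem baryPartial_zero_zero : baryPartial (p + 1) s 0 0 = -1 := by
  simp [baryPartial, Fin.prod_univ_succ, baryFactor, baryFactorSlope]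

theorem baryPartial_zero_succ (l : Fin (p + 1)) :
    baryPartial (p + 1) s 0 l.succ = bary p (Fin.tail s) l := by
  simp [baryPartial, bary, Fin.prod_univ_succ, baryFactor_succ_succ, baryFactorSlope]

theorem baryPartial_succ_succ (a : Fin p) (l : Fin (p + 1)) :
    baryPartial (p + 1) s a.succ l.succ = s 0 * baryPartial p (Fin.tail s) a l := by
  rw [baryPartial, baryPartial, Fin.prod_univ_succ,
    Function.update_of_ne (Fin.succ_ne_zero a).symm]
  congr 1
  refine prod_congr rfl fun b _ => ?_
  rcases eq_or_ne b a with rfl | hb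
  · simp [baryFactorSlope]
  · rw [Function.update_of_ne ((Fin.succ_injective _).ne hb), Function.update_of_ne hb,
      baryFactor_succ_succ]

end Recursion

theorem baryMatrix_zero_sub_smul_one {p : ℕ} (s : Fin (p + 1) → ℝ) :
    baryMatrix (p + 1) s 0 - s 0 • baryMatrix (p + 1) s 1 = Pi.single 0 1 := by
  funext l
  cases l using Fin.cases with
  | zero => simp [baryMatrix, bary_succ_zero, baryPartial_zero_zero]
  | succ l =>
    simp [baryMatrix, bary_succ_succ, baryPartial_zero_succ]

theorem baryMatrix_submatrix_succ {p : ℕ} (s : Fin (p + 1) → ℝ) :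
    (baryMatrix (p + 1) s).submatrix Fin.succ Fin.succ =
      Matrix.diagonal (Fin.cons 1 fun _ => s 0) * baryMatrix p (Fin.tail s) := by
  ext a l
  rw [Matrix.diagonal_mul]
  cases a using Fin.cases <;>
    simp [baryMatrix, baryPartial_zero_succ, baryPartial_succ_succ]

theorem det_baryMatrix_succ {p : ℕ} (s : Fin (p + 1) → ℝ) :
    (baryMatrix (p + 1) s).det = s 0 ^ p * (baryMatrix p (Fin.tail s)).det := by
  rw [← Matrix.det_updateRow_add_smul_self _ (zero_ne_one (α := Fin (p + 2))) (-s 0),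
    neg_smul, ← sub_eq_add_neg, baryMatrix_zero_sub_smul_one, ← Matrix.adjugate_apply,
    Matrix.adjugate_fin_succ_eq_det_submatrix, Fin.succAbove_zero, baryMatrix_submatrix_succ,
    Matrix.det_mul, Matrix.det_diagonal, Fin.prod_univ_succ]
  simp

theorem det_baryMatrix (p : ℕ) (s : Fin p → ℝ) :
    (baryMatrix p s).det = ∏ a, s a ^ (p - 1 - a) := by
  induction p with
  | zero => simp [baryMatrix, bary]
  | succ p ih =>
    rw [det_baryMatrix_succ, ih, Fin.prod_univ_succ]
    congr 1
    exact prod_congr rfl fun a _ => by rw [Fin.tail, Nat.sub_sub, add_comm]; rfl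

theorem setIntegral_cubeSet_prod (p : ℕ) (f : Fin p → ℝ → ℝ) :
    ∫ s in cubeSet p, ∏ a, f a (s a) = ∏ a, ∫ x in Set.Icc (0 : ℝ) 1, f a x := by
  rw [cubeSet, volume_pi, Measure.restrict_pi_pi, integral_fintype_prod_eq_prod]

theorem prod_fin_sub_one_sub_add_one_eq_factorial (p : ℕ) :
    ∏ a : Fin p, (p - 1 - a + 1) = p ! := by
  rw [Fin.prod_univ_eq_prod_range (fun a => p - 1 - a + 1),
    prod_range_reflect (fun a => a + 1), prod_range_add_one_eq_factorial]

theorem integral_det_baryMatrix (p : ℕ) :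
    ∫ s in cubeSet p, (baryMatrix p s).det = 1 / p ! := by
  simp_rw [det_baryMatrix]
  rw [setIntegral_cubeSet_prod p fun a x => x ^ (p - 1 - a)]
  simp only [integral_Icc_eq_integral_Ioc, ← intervalIntegral.integral_of_le zero_le_one,
    integral_pow]
  rw [← prod_fin_sub_one_sub_add_one_eq_factorial]
  push_cast
  simp

theorem simplexInt_whitney_self (n p : ℕ) {c : Fin (p + 1) → Fin (n + 1)}
    (hc : Function.Injective c) :
    simplexInt n p c (whitney n p c) = 1 / p ! := by
  simp only [simplexInt, simplexIntV, whitney_GmapV_eVec_eq_det_baryMatrix n p hc,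
    integral_det_baryMatrix]

theorem simplexInt_whitney_eq_zero_of_notMem_range (n p : ℕ) (c d : Fin (p + 1) → Fin (n + 1))
    {j : Fin (p + 1)} (hj : c j ∉ Set.range d) :
    simplexInt n p d (whitney n p c) = 0 := by
  have hzero (s : Fin p → ℝ) :
      whitney n p c (GmapV n p (fun l => eVec n (d l)) s)
        (fun a => fderiv ℝ (GmapV n p (fun l => eVec n (d l))) s (Pi.single a 1)) = 0 := by
    refine whitney_eq_zero_of_apply_eq_zero n p c j ?_ fun a => ?_
    · rw [GmapV_eq_sum_bary]
      exact sum_smul_eVec_apply_of_notMem_range n p hj _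
    · rw [fderiv_GmapV_apply_single]
      exact sum_smul_eVec_apply_of_notMem_range n p hj _
  simp [simplexInt, simplexIntV, hzero]

theorem simplexInt_whitneyBar (n p : ℕ) (c d : Fin (p + 1) → Fin (n + 1)) :
    simplexInt n p d (whitneyBar n p c) = p ! * simplexInt n p d (whitney n p c) :=
  integral_const_mul _ _

theorem ofDeg_self (n p : ℕ) (ω : Vec n → (Fin p → Vec n) → ℝ) : ofDeg n p ω p = ω := by
  funext t v
  rw [ofDeg, dif_pos rfl]
  rfl

theorem simplexInt_ofDeg_of_eq (n p : ℕ) {q : ℕ} (hq : q = p) (d : Fin (q + 1) → Fin (n + 1))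
    (ω : Vec n → (Fin p → Vec n) → ℝ) :
    simplexInt n q d (ofDeg n p ω q) = simplexInt n p (d ∘ Fin.cast (by omega)) ω := by
  subst hq
  rw [ofDeg_self]
  rfl

theorem Rmap_ofDeg_of_card_eq (n p : ℕ) (ω : Vec n → (Fin p → Vec n) → ℝ)
    {σ : Finset (Fin (n + 1))} (hσ : σ.card = p + 1) :
    Rmap n (ofDeg n p ω) σ = simplexInt n p (σ.orderEmbOfFin hσ) ω := by
  rw [Rmap, dif_pos (card_pos.1 (by omega)), simplexInt_ofDeg_of_eq n p (by omega)]
  congr 1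

theorem Rmap_ofDeg_of_card_ne (n p : ℕ) (ω : Vec n → (Fin p → Vec n) → ℝ)
    {σ : Finset (Fin (n + 1))} (hσ : σ.card ≠ p + 1) :
    Rmap n (ofDeg n p ω) σ = 0 := by
  rw [Rmap]
  split_ifs with hne
  · have hq : σ.card - 1 ≠ p := by have := card_pos.2 hne; omega
    simp [simplexInt, simplexIntV, ofDeg, hq]
  · rfl

end Whitney

open Whitney Finset

/-- `∫_{[i_0,…,i_p]} ω_{i_0,…,i_p} = 1/p!`, and consequently
`R(W(ĉ)) = ĉ` for the dual basis cochain `ĉ` of `[i_0, …, i_p]`. -/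
theorem integral_whitney_self (n p : ℕ)
    (c : Fin (p + 1) → Fin (n + 1)) (hc : StrictMono c) :
    simplexInt n p c (whitney n p c) = 1 / (Nat.factorial p : ℝ)
    ∧ ∀ σ : Finset (Fin (n + 1)),
        Rmap n (ofDeg n p (whitneyBar n p c)) σ
          = if σ = Finset.image c Finset.univ then 1 else 0 := by
  refine ⟨simplexInt_whitney_self n p hc.injective, fun σ => ?_⟩
  have hcard_image : (image c univ).card = p + 1 := by
    simp [card_image_of_injective _ hc.injective]
  by_cases hσ : σ.card = p + 1
  · rw [Rmap_ofDeg_of_card_eq n p _ hσ, simplexInt_whitneyBar]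
    split_ifs with hσc
    · subst hσc
      rw [← orderEmbOfFin_unique hσ (fun i => mem_image_of_mem c (mem_univ i)) hc,
        simplexInt_whitney_self n p hc.injective]
      field_simp
    · obtain ⟨j, hj⟩ : ∃ j, c j ∉ σ := by
        by_contra! h
        exact hσc (eq_of_subset_of_card_le (image_subset_iff.2 fun j _ => h j) (by omega)).symm
      rw [simplexInt_whitney_eq_zero_of_notMem_range n p c _ (j := j)
        (by rwa [range_orderEmbOfFin, mem_coe]), mul_zero]
  · rw [Rmap_ofDeg_of_card_ne n p _ hσ, if_neg]
    rintro rfl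
    exact hσ hcard_image

end
end

section
/- Let p ≥ 0 and 0 ≤ i_0 < … < i_p ≤ n. Then for every t ∈ ℝ^{n+1} with Σ_j t_j = 1 and all v_0,…,v_p ∈ V: (d ω̄_{i_0,…,i_p})(t)(v_0,…,v_p) = Σ_{k=0}^n ω̄_{k,i_0,…,i_p}(t)(v_0,…,v_p), where ω̄_{k,i_0,…,i_p} is the Whitney form of the (p+2)-tuple (k, i_0, …, i_p) (this form vanishes identically when k ∈ {i_0,…,i_p}). In particular the Whitney map is a cochain map: d∘W = W∘d, where d on cochains is the simplicial coboundary. -/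
open MeasureTheory
open scoped BigOperators

noncomputable section

open scoped Classical in
/-- The simplicial coboundary of the dual basis cochain of the simplex `σ`,
as a cochain (a function on finsets): `(d σ̂)(τ)` is the coefficient of `σ`
in `∂τ`. -/
def dCoD (n : ℕ) (σ : Finset (Fin (n + 1))) : Finset (Fin (n + 1)) → ℝ :=
  fun τ => ∑ w ∈ τ,
    if τ.erase w = σ then (-1 : ℝ) ^ ((τ.filter (fun u => u < w)).card) else 0

open scoped Classical in
/-- The Whitney map, sending a simplicial cochain `y` to the corresponding
(inhomogeneous) Whitney form `∑_σ y(σ) ω̄_σ`. -/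
def WmapF (n : ℕ) (y : Finset (Fin (n + 1)) → ℝ) : MForm n :=
  fun q t v => ∑ S : Finset (Fin (n + 1)),
    if h : S.card = q + 1 then
      y S * whitneyBar n q (fun a => (S.orderIsoOfFin h a : Fin (n + 1))) t v
    else 0

/-!
`ω̄_c(t)(w)` is `p!` times the determinant of the matrix with rows `t, w₀, …, w_{p-1}` restricted
to the columns `c`; in particular it is linear in `t`, so `dω̄_c(v) = Σ_j (-1)^j ω̄_c(v_j)(v without
v_j)`, and Laplace expansion along row `j` makes every summand `p! det (v_a (c b))`. Expanding
`ω̄_{k,c}(t)(v)` along its first column instead and summing over `k` replaces that column by the row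
sums `(Σ t, Σ v₀, …) = (1, 0, …, 0)`, which leaves `(p+1)! det (v_a (c b))` as well.
For the cochain identity, `ω̄_{k,σ}` vanishes when `k ∈ σ`, and for `k ∉ σ` sorting `(k, σ)` costs
the sign `(-1)^#{u ∈ σ | u < k}`, which is the coefficient of `σ` in `∂(σ ∪ {k})`.
-/

open Finset Matrix

section Whitney

variable {n p : ℕ}

lemma whitney_apply_succAbove (c : Fin (p + 1) → Fin (n + 1)) (v : Fin (p + 1) → Vec n)
    (j : Fin (p + 1)) :
    whitney n p c (v j) (fun i => v (j.succAbove i))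
      = (-1) ^ (j : ℕ) * ((of v).submatrix id c).det := by
  rw [det_succ_row _ j, mul_sum]
  refine sum_congr rfl fun l _ => ?_
  have hsign : (-1 : ℝ) ^ (j : ℕ) * (-1) ^ ((j : ℕ) + l) = (-1) ^ (l : ℕ) := by
    rw [pow_add, ← mul_assoc, ← mul_pow]
    norm_num
  have hminor : (of fun a b => v (j.succAbove a) (c (l.succAbove b))).det
      = (((of v).submatrix id c).submatrix j.succAbove l.succAbove).det := rfl
  rw [hminor, ← hsign]
  simp only [submatrix_apply, of_apply, id]
  ring

lemma whitney_eq_det (c : Fin (p + 1) → Fin (n + 1)) (t : Vec n) (v : Fin p → Vec n) :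
    whitney n p c t v = ((of (vecCons t v)).submatrix id c).det := by
  simpa using whitney_apply_succAbove c (vecCons t v) 0

lemma whitney_comp_perm (c : Fin (p + 1) → Fin (n + 1)) (τ : Equiv.Perm (Fin (p + 1)))
    (t : Vec n) (v : Fin p → Vec n) :
    whitney n p (c ∘ τ) t v = Equiv.Perm.sign τ * whitney n p c t v := by
  rw [whitney_eq_det, whitney_eq_det, ← det_permute']
  rfl

lemma whitney_eq_zero_of_eq (c : Fin (p + 1) → Fin (n + 1)) {i j : Fin (p + 1)}
    (hij : i ≠ j) (h : c i = c j) (t : Vec n) (v : Fin p → Vec n) :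
    whitney n p c t v = 0 := by
  rw [whitney_eq_det]
  exact det_zero_of_column_eq hij fun k => by simp [h]

lemma fderiv_whitneyBar (c : Fin (p + 1) → Fin (n + 1)) (w : Fin p → Vec n) (t u : Vec n) :
    fderiv ℝ (fun x => whitneyBar n p c x w) t u = whitneyBar n p c u w := by
  let L : Vec n →ₗ[ℝ] ℝ :=
    { toFun := fun x => whitneyBar n p c x w
      map_add' := fun x y => by
        simp only [whitneyBar, whitney, Pi.add_apply, ← mul_add, ← sum_add_distrib]
        exact congrArg _ (sum_congr rfl fun l _ => by ring)
      map_smul' := fun r x => by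
        simp only [whitneyBar, whitney, Pi.smul_apply, smul_eq_mul, mul_sum, RingHom.id_apply]
        exact sum_congr rfl fun l _ => by ring }
  exact congrArg (· u) L.toContinuousLinearMap.fderiv

lemma sum_whitney_cons (c : Fin (p + 1) → Fin (n + 1)) (t : Vec n) (ht : ∑ k, t k = 1)
    (v : Fin (p + 1) → Vec n) (hv : ∀ a, ∑ k, v a k = 0) :
    ∑ k, whitney n (p + 1) (Fin.cons k c) t v = ((of v).submatrix id c).det := by
  have hexpand : ∀ k, whitney n (p + 1) (Fin.cons k c) t v = ∑ i : Fin (p + 2),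
      (-1) ^ (i : ℕ) * vecCons t v i k * ((of (vecCons t v)).submatrix i.succAbove c).det := by
    intro k
    rw [whitney_eq_det, det_succ_column_zero]
    rfl
  rw [sum_congr rfl fun k _ => hexpand k, sum_comm, Fin.sum_univ_succ]
  simp [← mul_sum, ← sum_mul, ht, hv]
  rfl

lemma ofDeg_self (ω : Vec n → (Fin p → Vec n) → ℝ) (t : Vec n) (v : Fin p → Vec n) :
    ofDeg n p ω p t v = ω t v := by
  simp [ofDeg]

lemma exd_succ_congr {F G : MForm n} (h : F p = G p) : exd n F (p + 1) = exd n G (p + 1) := by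
  simp only [exd, h]

lemma exd_ofDeg_whitneyBar (c : Fin (p + 1) → Fin (n + 1)) (t : Vec n) (ht : ∑ k, t k = 1)
    (v : Fin (p + 1) → Vec n) (hv : ∀ a, ∑ k, v a k = 0) :
    exd n (ofDeg n p (whitneyBar n p c)) (p + 1) t v
      = ∑ k, whitneyBar n (p + 1) (Fin.cons k c) t v := by
  have hterm : ∀ j : Fin (p + 1), (-1) ^ (j : ℕ) *
      fderiv ℝ (fun x => ofDeg n p (whitneyBar n p c) p x fun i => v (j.succAbove i)) t (v j)
        = (p.factorial : ℝ) * ((of v).submatrix id c).det := by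
    intro j
    simp only [ofDeg_self]
    rw [fderiv_whitneyBar, whitneyBar, whitney_apply_succAbove, mul_left_comm,
      ← mul_assoc ((-1) ^ (j : ℕ)), ← mul_pow]
    norm_num
  calc exd n (ofDeg n p (whitneyBar n p c)) (p + 1) t v
      = ∑ j : Fin (p + 1), (p.factorial : ℝ) * ((of v).submatrix id c).det :=
        sum_congr rfl fun j _ => hterm j
    _ = ∑ k, whitneyBar n (p + 1) (Fin.cons k c) t v := by
      simp only [whitneyBar, ← mul_sum, sum_whitney_cons c t ht v hv, sum_const, card_univ,
        Fintype.card_fin, nsmul_eq_mul, Nat.factorial_succ]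
      push_cast
      ring

end Whitney

lemma Finset.card_filter_lt_orderEmbOfFin {α : Type*} [LinearOrder α] (s : Finset α) {k : ℕ}
    (h : s.card = k) (i : Fin k) : #(s.filter (· < s.orderEmbOfFin h i)) = i := by
  have hfilter : s.filter (· < s.orderEmbOfFin h i)
      = (Iio i).map (s.orderEmbOfFin h).toEmbedding := by
    ext x
    simp only [mem_filter, mem_map, mem_Iio]
    constructor
    · rintro ⟨hx, hlt⟩
      obtain ⟨j, rfl⟩ : x ∈ Set.range (s.orderEmbOfFin h) := by simpa using hx
      exact ⟨j, (s.orderEmbOfFin h).lt_iff_lt.mp hlt, rfl⟩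
    · rintro ⟨j, hj, rfl⟩
      exact ⟨orderEmbOfFin_mem s h j, (s.orderEmbOfFin h).lt_iff_lt.mpr hj⟩
  rw [hfilter, card_map, Fin.card_Iio]

def whitneyBarSimplex (n : ℕ) (S : Finset (Fin (n + 1))) : MForm n :=
  fun q t v => if h : S.card = q + 1 then whitneyBar n q (S.orderEmbOfFin h) t v else 0

section Simplex

variable {n p : ℕ}

lemma WmapF_eq_sum (y : Finset (Fin (n + 1)) → ℝ) (q : ℕ) (t : Vec n) (v : Fin q → Vec n) :
    WmapF n y q t v = ∑ S, y S * whitneyBarSimplex n S q t v := by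
  simp only [WmapF, whitneyBarSimplex, coe_orderIsoOfFin_apply, mul_dite, mul_zero]

lemma WmapF_indicator (σ : Finset (Fin (n + 1))) :
    WmapF n (fun τ => if τ = σ then 1 else 0) = whitneyBarSimplex n σ := by
  funext q t v
  simp [WmapF_eq_sum]

lemma whitneyBar_cons_orderEmbOfFin (σ : Finset (Fin (n + 1))) (h : σ.card = p + 1)
    {k : Fin (n + 1)} (hk : k ∉ σ) (t : Vec n) (v : Fin (p + 1) → Vec n) :
    whitneyBar n (p + 1) (Fin.cons k (σ.orderEmbOfFin h)) t v
      = (-1) ^ #(σ.filter (· < k)) * whitneyBarSimplex n (insert k σ) (p + 1) t v := by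
  have h2 : (insert k σ).card = p + 2 := by rw [card_insert_of_notMem hk, h]
  set e := (insert k σ).orderEmbOfFin h2
  obtain ⟨m, hm⟩ : k ∈ Set.range e := by simp [e]
  have hsucc : e ∘ m.succAbove = σ.orderEmbOfFin h := by
    refine orderEmbOfFin_unique h (fun a => ?_) (e.strictMono.comp (Fin.strictMono_succAbove m))
    refine mem_of_mem_insert_of_ne (orderEmbOfFin_mem _ h2 _) fun hak => ?_
    exact Fin.succAbove_ne m a (e.injective (hak.trans hm.symm))
  have hcons : (Fin.cons k (σ.orderEmbOfFin h) : Fin (p + 2) → Fin (n + 1))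
      = e ∘ m.cycleRange.symm := by
    funext a
    cases a using Fin.cases with
    | zero => simp [Fin.cycleRange_symm_zero, hm]
    | succ a => simp [Fin.cycleRange_symm_succ, ← hsucc]
  have hpos : #(σ.filter (· < k)) = m := by
    have hcount : #((insert k σ).filter (· < e m)) = m := card_filter_lt_orderEmbOfFin _ h2 m
    rwa [hm, filter_insert, if_neg (lt_irrefl _)] at hcount
  rw [whitneyBarSimplex, dif_pos h2, hcons, whitneyBar, whitneyBar, whitney_comp_perm,
    Equiv.Perm.sign_symm, Fin.sign_cycleRange, hpos]
  push_cast
  ring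

lemma sum_dCoD_mul (σ : Finset (Fin (n + 1))) (g : Finset (Fin (n + 1)) → ℝ) :
    ∑ S, dCoD n σ S * g S = ∑ k ∈ σᶜ, (-1) ^ #(σ.filter (· < k)) * g (insert k σ) := by
  have hfiber : ∀ k S, (k ∈ S ∧ S.erase k = σ) ↔ (k ∉ σ ∧ insert k σ = S) := by
    refine fun k S => ⟨?_, ?_⟩
    · rintro ⟨hk, rfl⟩
      exact ⟨notMem_erase k S, insert_erase hk⟩
    · rintro ⟨hk, rfl⟩
      exact ⟨mem_insert_self k σ, erase_insert hk⟩
  calc ∑ S, dCoD n σ S * g S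
      = ∑ S, ∑ k, if k ∈ S ∧ S.erase k = σ then (-1) ^ #(S.filter (· < k)) * g S else 0 := by
        refine sum_congr rfl fun S _ => ?_
        rw [dCoD, sum_mul, ← sum_ite_mem_eq]
        simp only [ite_mul, zero_mul, ite_and]
    _ = ∑ k, if k ∉ σ then (-1) ^ #((insert k σ).filter (· < k)) * g (insert k σ) else 0 := by
        rw [sum_comm]
        simp only [hfiber, ite_and, sum_ite_irrel, sum_ite_eq, mem_univ, if_true, sum_const_zero]
    _ = ∑ k ∈ σᶜ, (-1) ^ #(σ.filter (· < k)) * g (insert k σ) := by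
        rw [← sum_filter, filter_not, filter_mem_eq_inter, univ_inter, ← compl_eq_univ_sdiff]
        refine sum_congr rfl fun k _ => ?_
        rw [filter_insert, if_neg (lt_irrefl k)]

lemma exd_whitneyBarSimplex (σ : Finset (Fin (n + 1))) (t : Vec n) (ht : ∑ k, t k = 1)
    (v : Fin (p + 1) → Vec n) (hv : ∀ a, ∑ k, v a k = 0) :
    exd n (whitneyBarSimplex n σ) (p + 1) t v
      = ∑ k ∈ σᶜ, (-1) ^ #(σ.filter (· < k)) * whitneyBarSimplex n (insert k σ) (p + 1) t v := by
  by_cases h : σ.card = p + 1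
  · have hform : whitneyBarSimplex n σ p = ofDeg n p (whitneyBar n p (σ.orderEmbOfFin h)) p := by
      funext x w
      simp [whitneyBarSimplex, h, ofDeg_self]
    rw [exd_succ_congr hform, exd_ofDeg_whitneyBar _ t ht v hv, ← sum_subset (subset_univ σᶜ)]
    · exact sum_congr rfl fun k hk => whitneyBar_cons_orderEmbOfFin σ h (mem_compl.mp hk) t v
    · intro k _ hk
      obtain ⟨a, ha⟩ : k ∈ Set.range (σ.orderEmbOfFin h) := by simpa using hk
      rw [whitneyBar, whitney_eq_zero_of_eq _ (Fin.succ_ne_zero a) (by simp [ha]), mul_zero]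
  · have hzero : exd n (whitneyBarSimplex n σ) (p + 1) t v = 0 := by
      simp [exd, whitneyBarSimplex, h]
    refine hzero.trans (sum_eq_zero fun k hk => ?_).symm
    have hcard : (insert k σ).card ≠ p + 2 := by
      rw [card_insert_of_notMem (mem_compl.mp hk)]
      omega
    simp [whitneyBarSimplex, hcard]

end Simplex

theorem whitney_map_is_cochain_map_general (n p : ℕ)
    (c : Fin (p + 1) → Fin (n + 1)) :
    -- (1) dω̄ = ∑_k ω̄_{k, i_0, …, i_p}
    (∀ t : Vec n, (∑ j, t j) = 1 →
      ∀ v : Fin (p + 1) → Vec n, (∀ a, ∑ j, v a j = 0) →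
        exd n (ofDeg n p (whitneyBar n p c)) (p + 1) t v
          = ∑ k : Fin (n + 1), whitneyBar n (p + 1) (Fin.cons k c) t v)
    ∧
    -- (2) d ∘ W = W ∘ d on the dual basis cochains
    (∀ σ : Finset (Fin (n + 1)), σ.Nonempty →
      ∀ q : ℕ, ∀ t : Vec n, (∑ j, t j) = 1 →
        ∀ v : Fin q → Vec n, (∀ a, ∑ j, v a j = 0) →
          exd n (WmapF n (fun τ => if τ = σ then 1 else 0)) q t v
            = WmapF n (dCoD n σ) q t v) := by
  refine ⟨fun t ht v hv => exd_ofDeg_whitneyBar c t ht v hv, fun σ hσ q t ht v hv => ?_⟩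
  rw [WmapF_indicator, WmapF_eq_sum, sum_dCoD_mul]
  cases q with
  | zero =>
    refine (sum_eq_zero fun k hk => ?_).symm
    have hcard : (insert k σ).card ≠ 0 + 1 := by
      rw [card_insert_of_notMem (mem_compl.mp hk)]
      simpa using hσ.ne_empty
    simp [whitneyBarSimplex, hcard]
  | succ p => exact exd_whitneyBarSimplex σ t ht v hv

/-- `d ω̄_{i_0…i_p} = ∑_k ω̄_{k,i_0,…,i_p}` (on tangent
tuples along the hyperplane `∑ t_j = 1`), and consequently `d ∘ W = W ∘ d`. -/
theorem whitney_map_is_cochain_map (n p : ℕ)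
    (c : Fin (p + 1) → Fin (n + 1)) (hc : StrictMono c) :
    -- (1) dω̄ = ∑_k ω̄_{k, i_0, …, i_p}
    (∀ t : Vec n, (∑ j, t j) = 1 →
      ∀ v : Fin (p + 1) → Vec n, (∀ a, ∑ j, v a j = 0) →
        exd n (ofDeg n p (whitneyBar n p c)) (p + 1) t v
          = ∑ k : Fin (n + 1), whitneyBar n (p + 1) (Fin.cons k c) t v)
    ∧
    -- (2) d ∘ W = W ∘ d on the dual basis cochains
    (∀ σ : Finset (Fin (n + 1)), σ.Nonempty →
      ∀ q : ℕ, ∀ t : Vec n, (∑ j, t j) = 1 →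
        ∀ v : Fin q → Vec n, (∀ a, ∑ j, v a j = 0) →
          exd n (WmapF n (fun τ => if τ = σ then 1 else 0)) q t v
            = WmapF n (dCoD n σ) q t v) :=
  whitney_map_is_cochain_map_general n p c
end
end

section
/- Fix n ≥ 1, I = {i_0 < … < i_k} ⊆ {0,…,n} and m ∈ {0,…,k}. Define linear coordinates on ℝ^{n+1} by t'_⋆ = (k+1)·t_{i_m}, t'_i = t_i − t_{i_m} for i ∈ I∖{i_m}, and t'_j = t_j for j ∉ I, and for tuples of indices from {⋆} ∪ ({0,…,n}∖{i_m}) let ω̄' denote the Whitney form built from the t' and dt' (i.e. ω'_{a_0,…,a_p} = Σ_l (−1)^l t'_{a_l} dt'_{a_0}∧⋯∧\widehat{dt'_{a_l}}∧⋯∧dt'_{a_p} and ω̄' = p!·ω'). Then for every tuple 0 ≤ j_0 < … < j_l ≤ n with j_a ≠ i_m for all a, at every point t ∈ ℝ^{n+1} with Σ_j t_j = 1 and on tangent vectors from V: (1) ω̄'_{j_0,…,j_l} = ω̄_{j_0,…,j_l} − Σ_{a : j_a ∈ I} (−1)^a ω̄_{i_m, j_0,…,ĵ_a,…,j_l}; (2)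 ω̄'_{⋆, j_0,…,j_l} = (k+1)·ω̄_{i_m, j_0,…,j_l}. -/
open scoped BigOperators

noncomputable section

/-- The Whitney form of a tuple, with respect to an arbitrary family of linear
coordinates `lam` (each `lam a` is used both as a coordinate function and,
applied to a vector, as its differential). -/
def whitneyG (n p : ℕ) {ι : Type*} (lam : ι → Vec n → ℝ)
    (c : Fin (p + 1) → ι) : Vec n → (Fin p → Vec n) → ℝ :=
  fun t v => ∑ l : Fin (p + 1), (-1 : ℝ) ^ (l : ℕ) * lam (c l) t *
    Matrix.det (Matrix.of fun a b : Fin p => lam (c (Fin.succAbove l b)) (v a))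

/-- The standard coordinates `t_j` on ℝ^{n+1}. -/
def lamStd (n : ℕ) (j : Fin (n + 1)) : Vec n → ℝ := fun t => t j

/-- The barycentric coordinates `t'` of the `m`-th top-dimensional simplex of
the stellar subdivision `⋆_I Δ^n`: `t'_⋆ = (k+1)t_{i_m}`,
`t'_i = t_i - t_{i_m}` for `i ∈ I ∖ {i_m}`, `t'_j = t_j` for `j ∉ I`.
The index `⋆` is encoded by `none`. -/
def lamPrime (n : ℕ) (I : Finset (Fin (n + 1))) (im : Fin (n + 1)) :
    Option (Fin (n + 1)) → Vec n → ℝ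
  | none => fun t => (I.card : ℝ) * t im
  | some j => fun t => if j ∈ I then t j - t im else t j

/-- Whitney form as a determinant. -/
lemma whitneyG_eq_det (n p : ℕ) {ι : Type*} (lam : ι → Vec n → ℝ)
    (c : Fin (p + 1) → ι) (t : Vec n) (v : Fin p → Vec n) :
    whitneyG n p lam c t v
      = Matrix.det (Matrix.of fun i j =>
          Fin.cons (lam (c j) t) (fun a => lam (c j) (v a)) i) := by
  rw [Matrix.det_succ_row_zero]
  unfold whitneyG
  refine Finset.sum_congr rfl fun j _ => ?_
  congr 1

/-- Column version of `det_eq_of_forall_row_eq_smul_add_const`. -/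
lemma det_eq_of_forall_col_eq_smul_add_const {m : Type*} [DecidableEq m] [Fintype m]
    {A B : Matrix m m ℝ} (c : m → ℝ) (k : m) (hk : c k = 0)
    (h : ∀ i j, A i j = B i j + c j * B i k) : A.det = B.det := by
  rw [← Matrix.det_transpose A, ← Matrix.det_transpose B]
  exact Matrix.det_eq_of_forall_row_eq_smul_add_const c k hk (fun i j => h j i)

/-- Rank-one expansion of the determinant after subtracting multiples of a
fixed vector `u` from the columns in `S`. -/
lemma det_colops {m : ℕ} (A : Matrix (Fin m) (Fin m) ℝ) (u : Fin m → ℝ)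
    (ε : Fin m → ℝ) (S : Finset (Fin m)) :
    Matrix.det (Matrix.of fun i j => if j ∈ S then A i j - ε j * u i else A i j)
      = A.det - ∑ j ∈ S, ε j * (A.updateCol j u).det := by
  induction S using Finset.induction_on with
  | empty =>
    simp only [Finset.notMem_empty, if_false, Finset.sum_empty, sub_zero]
    rfl
  | @insert a S ha ih =>
    have hins : (Matrix.of fun i j =>
          if j ∈ insert a S then A i j - ε j * u i else A i j)
        = Matrix.updateCol
            (Matrix.of fun i j => if j ∈ S then A i j - ε j * u i else A i j) a
            ((fun i => A i a) + (-ε a) • u) := by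
      ext i j
      rw [Matrix.updateCol_apply]
      by_cases hj : j = a
      · subst hj
        simp only [Finset.mem_insert, true_or, if_true, Matrix.of_apply,
          Pi.add_apply, Pi.smul_apply, smul_eq_mul, if_pos rfl]
        ring
      · simp [Finset.mem_insert, hj]
    rw [hins, Matrix.det_updateCol_add, Matrix.det_updateCol_smul,
      Finset.sum_insert ha]
    have h1 : Matrix.updateCol
          (Matrix.of fun i j => if j ∈ S then A i j - ε j * u i else A i j) a
          (fun i => A i a)
        = (Matrix.of fun i j => if j ∈ S then A i j - ε j * u i else A i j) := by
      ext i j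
      rw [Matrix.updateCol_apply]
      by_cases hj : j = a
      · subst hj; simp [ha]
      · simp [hj]
    have h2 : (Matrix.updateCol
          (Matrix.of fun i j => if j ∈ S then A i j - ε j * u i else A i j) a
          u).det = (A.updateCol a u).det := by
      refine det_eq_of_forall_col_eq_smul_add_const
        (fun j => if j ∈ S then -ε j else 0) a (by simp [ha]) (fun i j => ?_)
      rw [Matrix.updateCol_apply, Matrix.updateCol_apply,
        Matrix.updateCol_apply]
      by_cases hj : j = a
      · subst hj; simp [ha]
      · by_cases hjS : j ∈ S <;> simp [hj, hjS] <;> ring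
    rw [h1, h2, ih]
    ring

lemma neg_one_pow_mul_self (N : ℕ) : (-1 : ℝ) ^ N * (-1 : ℝ) ^ N = 1 := by
  rw [← pow_add, ← two_mul, pow_mul]; norm_num

/-- Comparison of the Whitney forms of `⋆_I Δ^n` (in the
primed barycentric coordinates of the `m`-th top simplex) with the Whitney
forms of `Δ^n`. -/
theorem primed_whitney_forms (n : ℕ) (hn : 1 ≤ n)
    (I : Finset (Fin (n + 1))) (hI : I.Nonempty)
    (im : Fin (n + 1)) (him : im ∈ I)
    (l : ℕ) (c : Fin (l + 1) → Fin (n + 1)) (hc : StrictMono c)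
    (hcm : ∀ a, c a ≠ im) :
    -- (1) ω̄'_{j_0,…,j_l} = ω̄_{j_0,…,j_l} - ∑_{a : j_a ∈ I} (-1)^a ω̄_{i_m, j_0,…,ĵ_a,…,j_l}
    (∀ t : Vec n, (∑ j, t j) = 1 → ∀ v : Fin l → Vec n, (∀ a, ∑ j, v a j = 0) →
      (Nat.factorial l : ℝ) *
          whitneyG n l (lamPrime n I im) (fun a => some (c a)) t v
        = (Nat.factorial l : ℝ) * whitneyG n l (lamStd n) c t v
          - ∑ a ∈ Finset.univ.filter (fun a : Fin (l + 1) => c a ∈ I),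
              (-1 : ℝ) ^ (a : ℕ) * ((Nat.factorial l : ℝ) *
                whitneyG n l (lamStd n)
                  (Fin.cons im (fun b => c (Fin.succAbove a b))) t v))
    ∧
    -- (2) ω̄'_{⋆, j_0,…,j_l} = (k+1) ω̄_{i_m, j_0,…,j_l}
    (∀ t : Vec n, (∑ j, t j) = 1 →
      ∀ v : Fin (l + 1) → Vec n, (∀ a, ∑ j, v a j = 0) →
      (Nat.factorial (l + 1) : ℝ) *
          whitneyG n (l + 1) (lamPrime n I im)
            (Fin.cons none (fun a => some (c a))) t v
        = (I.card : ℝ) * ((Nat.factorial (l + 1) : ℝ) *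
            whitneyG n (l + 1) (lamStd n) (Fin.cons im c) t v)) := by
  constructor
  · -- part (1)
    intro t _ v _
    simp only [whitneyG_eq_det]
    set A₁ : Matrix (Fin (l + 1)) (Fin (l + 1)) ℝ :=
      Matrix.of fun i j => (Fin.cons (lamStd n (c j) t) (fun a => lamStd n (c j) (v a)) : Fin (l+1) → ℝ) i with hA₁
    set u : Fin (l + 1) → ℝ := Fin.cons (t im) (fun a => v a im) with hu
    set S : Finset (Fin (l + 1)) := Finset.univ.filter (fun a => c a ∈ I) with hS
    have hM1 : (Matrix.of fun i j =>
          (Fin.cons (lamPrime n I im (some (c j)) t)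
            (fun a => lamPrime n I im (some (c j)) (v a)) : Fin (l+1) → ℝ) i)
        = Matrix.of fun i j => if j ∈ S then A₁ i j - (1 : ℝ) * u i else A₁ i j := by
      ext i j
      have hmem : (j ∈ S) = (c j ∈ I) := by simp [hS]
      refine Fin.cases ?_ (fun b => ?_) i <;>
        · simp only [Matrix.of_apply, Fin.cons_zero, Fin.cons_succ, lamPrime, lamStd,
            hmem, hA₁, hu]
          split_ifs <;> ring
    rw [hM1, det_colops]
    -- relate updateColumn dets to the cons-tuple dets
    have hupd : ∀ a : Fin (l + 1),
        (A₁.updateCol a u).det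
          = (-1 : ℝ) ^ (a : ℕ) * (Matrix.of fun i j =>
              (Fin.cons (lamStd n ((Fin.cons im (fun b => c (Fin.succAbove a b)) : Fin (l+1) → Fin (n+1)) j) t)
                (fun b' => lamStd n ((Fin.cons im (fun b => c (Fin.succAbove a b)) : Fin (l+1) → Fin (n+1)) j) (v b')) : Fin (l+1) → ℝ) i).det := by
      intro a
      have hperm : (Matrix.of fun i j =>
              (Fin.cons (lamStd n ((Fin.cons im (fun b => c (Fin.succAbove a b)) : Fin (l+1) → Fin (n+1)) j) t)
                (fun b' => lamStd n ((Fin.cons im (fun b => c (Fin.succAbove a b)) : Fin (l+1) → Fin (n+1)) j) (v b')) : Fin (l+1) → ℝ) i)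
          = (A₁.updateCol a u).submatrix id (a.cycleRange.symm) := by
        ext i j
        rw [Matrix.submatrix_apply, id_eq]
        refine Fin.cases ?_ (fun b => ?_) j
        · rw [Fin.cycleRange_symm_zero, Matrix.updateCol_apply, if_pos rfl]
          refine Fin.cases ?_ (fun b' => ?_) i <;> simp [lamStd, hu]
        · rw [Fin.cycleRange_symm_succ, Matrix.updateCol_apply,
            if_neg (Fin.succAbove_ne a b)]
          simp [lamStd, hA₁]
      rw [hperm]
      have : ((a.cycleRange.symm : Equiv.Perm (Fin (l + 1)))) = a.cycleRange⁻¹ := rfl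
      rw [Matrix.det_permute', this, Equiv.Perm.sign_inv, Fin.sign_cycleRange]
      rw [← mul_assoc]
      norm_num [neg_one_pow_mul_self]
    rw [mul_sub, Finset.mul_sum]
    congr 1
    refine Finset.sum_congr rfl fun a ha => ?_
    rw [hupd a]
    ring
  · -- part (2)
    intro t _ v _
    simp only [whitneyG_eq_det]
    set A : Matrix (Fin (l + 2)) (Fin (l + 2)) ℝ :=
      Matrix.of fun i j => (Fin.cons (lamStd n ((Fin.cons im c : Fin (l+2) → Fin (n+1)) j) t)
        (fun a => lamStd n ((Fin.cons im c : Fin (l+2) → Fin (n+1)) j) (v a)) : Fin (l+2) → ℝ) i with hA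
    set ε : Fin (l + 2) → ℝ := Fin.cons 0 (fun b => if c b ∈ I then -1 else 0) with hε
    set M'' : Matrix (Fin (l + 2)) (Fin (l + 2)) ℝ :=
      Matrix.of fun i j => A i j + ε j * A i 0 with hM''
    have hdet : M''.det = A.det := by
      refine det_eq_of_forall_col_eq_smul_add_const ε 0 (by simp [hε]) (fun i j => ?_)
      simp [hM'']
    have hM' : (Matrix.of fun i j =>
          (Fin.cons (lamPrime n I im ((Fin.cons none (fun a => some (c a)) : Fin (l+2) → Option (Fin (n+1))) j) t)
            (fun a => lamPrime n I im ((Fin.cons none (fun a => some (c a)) : Fin (l+2) → Option (Fin (n+1))) j) (v a)) : Fin (l+2) → ℝ) i)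
        = M''.updateCol 0 ((I.card : ℝ) • fun i => A i 0) := by
      ext i j
      rw [Matrix.updateCol_apply]
      refine Fin.cases ?_ (fun b => ?_) j
      · rw [if_pos rfl]
        refine Fin.cases ?_ (fun a => ?_) i <;>
          simp [lamPrime, lamStd, hA]
      · rw [if_neg (Fin.succ_ne_zero b)]
        refine Fin.cases ?_ (fun a => ?_) i <;>
          · simp only [Matrix.of_apply, Fin.cons_zero, Fin.cons_succ, lamPrime, lamStd,
              hM'', hε, hA]
            split_ifs <;> ring
    have hself : M''.updateCol 0 (fun i => A i 0) = M'' := by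
      ext i j
      rw [Matrix.updateCol_apply]
      by_cases hj : j = 0
      · subst hj; simp [hM'', hε]
      · simp [hj]
    rw [hM', Matrix.det_updateCol_smul, hself, hdet]
    ring

end
end
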